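/- arXiv:2506.03405 — 2 statements merged into one kernel-verified Lean document; each statement's English description precedes it below -/
import Mathlib

section
/- If the kernel k is nonnegative, nontrivial, bounded, and has support contained in a compact interval [δ, a_max] with 0 < δ, then the Euler–Lotka equation k̄(λ)=1 has exactly one real root r, and sign(R₀ − 1) = sign(r), where R₀ = k̄(0) = ∫₀^∞ k(a) da. -/
/-!
`k̄` is convex (as an integral of convex functions of `λ`), hence continuous, and strictly
decreasing because `e^{-λa}` strictly decreases in `λ` for `a > 0` while `k` has positive mass
there. Since `k` lives on `[δ, ∞)` with `δ > 0`, comparing `e^{-λa}` with `e^{-λδ}` gives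
`k̄(λ) ≤ e^{-λδ} R₀` for `λ ≥ 0` and the reverse inequality for `λ ≤ 0`, so every positive value,
in particular `1`, is attained exactly once. Strict monotonicity also ties the sign of
`R₀ - 1 = k̄(0) - k̄(r)` to that of `r`.
-/

open MeasureTheory Real Set Function

theorem StrictAnti.sign_sub {f : ℝ → ℝ} (hf : StrictAnti f) (x y : ℝ) :
    sign (f x - f y) = sign (y - x) := by
  rcases lt_trichotomy x y with h | rfl | h
  · rw [sign_of_pos (sub_pos.2 (hf h)), sign_of_pos (sub_pos.2 h)]
  · simp
  · rw [sign_of_neg (sub_neg.2 (hf h)), sign_of_neg (sub_neg.2 h)]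

theorem integrable_mul_of_support_subset_isCompact {X : Type*} [TopologicalSpace X]
    [T2Space X] [MeasurableSpace X] [OpensMeasurableSpace X] {μ : Measure X} {g k : X → ℝ}
    {s : Set X} (hg : Continuous g) (hs : IsCompact s) (hk : IntegrableOn k s μ)
    (hsupp : support k ⊆ s) : Integrable (fun a => g a * k a) μ :=
  (integrableOn_iff_integrable_of_support_subset ((support_mul_subset_right _ _).trans hsupp)).1
    (hk.continuousOn_mul hg.continuousOn hs)

/-- The transform `k̄` of the Euler–Lotka equation `k̄(λ) = 1`. -/
noncomputable def laplaceTransform (k : ℝ → ℝ) (l : ℝ) : ℝ :=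
  ∫ a in Ioi 0, exp (-l * a) * k a

namespace laplaceTransform

variable {k : ℝ → ℝ}

theorem nonneg (hk : ∀ a, 0 ≤ k a) (l : ℝ) : 0 ≤ laplaceTransform k l :=
  setIntegral_nonneg measurableSet_Ioi fun a _ => mul_nonneg (exp_pos _).le (hk a)

theorem strictAnti (hk : ∀ a, 0 ≤ k a) (hpos : 0 < volume {a | a ∈ Ioi (0 : ℝ) ∧ 0 < k a})
    (hint : ∀ l, IntegrableOn (fun a => exp (-l * a) * k a) (Ioi 0)) :
    StrictAnti (laplaceTransform k) := by
  intro l₁ l₂ hl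
  have hexp : ∀ a ∈ Ioi (0 : ℝ), exp (-l₂ * a) < exp (-l₁ * a) := fun a (ha : 0 < a) =>
    exp_lt_exp.2 (by nlinarith)
  have hint' : IntegrableOn (fun a => (exp (-l₁ * a) - exp (-l₂ * a)) * k a) (Ioi 0) := by
    simp only [sub_mul]
    exact (hint l₁).sub (hint l₂)
  have hdiff : 0 < ∫ a in Ioi 0, (exp (-l₁ * a) - exp (-l₂ * a)) * k a := by
    rw [setIntegral_pos_iff_support_of_nonneg_ae (ae_restrict_of_forall_mem measurableSet_Ioi
      fun a ha => mul_nonneg (sub_pos.2 (hexp a ha)).le (hk a)) hint']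
    exact hpos.trans_le (measure_mono fun a ⟨ha, hka⟩ =>
      ⟨(mul_pos (sub_pos.2 (hexp a ha)) hka).ne', ha⟩)
  simp only [sub_mul] at hdiff
  rw [integral_sub (hint l₁) (hint l₂)] at hdiff
  exact sub_pos.1 hdiff

theorem convexOn (hk : ∀ a, 0 ≤ k a)
    (hint : ∀ l, IntegrableOn (fun a => exp (-l * a) * k a) (Ioi 0)) :
    ConvexOn ℝ univ (laplaceTransform k) := by
  refine ⟨convex_univ, fun x _ y _ s t hs ht hst => ?_⟩
  have hpointwise : ∀ a, exp (-(s * x + t * y) * a) * k a ≤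
      s * (exp (-x * a) * k a) + t * (exp (-y * a) * k a) := by
    intro a
    have hconv := convexOn_exp.2 (mem_univ (-x * a)) (mem_univ (-y * a)) hs ht hst
    simp only [smul_eq_mul] at hconv
    calc exp (-(s * x + t * y) * a) * k a = exp (s * (-x * a) + t * (-y * a)) * k a := by
          ring_nf
      _ ≤ (s * exp (-x * a) + t * exp (-y * a)) * k a := mul_le_mul_of_nonneg_right hconv (hk a)
      _ = s * (exp (-x * a) * k a) + t * (exp (-y * a) * k a) := by ring
  simp only [laplaceTransform, smul_eq_mul]
  rw [← integral_const_mul, ← integral_const_mul,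
    ← integral_add ((hint x).const_mul s) ((hint y).const_mul t)]
  exact setIntegral_mono_on (hint _) (((hint x).const_mul s).add ((hint y).const_mul t))
    measurableSet_Ioi fun a _ => hpointwise a

theorem continuous (hk : ∀ a, 0 ≤ k a)
    (hint : ∀ l, IntegrableOn (fun a => exp (-l * a) * k a) (Ioi 0)) :
    Continuous (laplaceTransform k) :=
  continuousOn_univ.1 ((convexOn hk hint).continuousOn isOpen_univ)

variable {δ : ℝ}

theorem le_exp_mul_zero (hk : ∀ a, 0 ≤ k a) (hsupp : support k ⊆ Ici δ)
    (hint : ∀ l, IntegrableOn (fun a => exp (-l * a) * k a) (Ioi 0)) {l : ℝ} (hl : 0 ≤ l) :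
    laplaceTransform k l ≤ exp (-l * δ) * laplaceTransform k 0 := by
  rw [laplaceTransform, laplaceTransform, ← integral_const_mul]
  refine setIntegral_mono_on (hint l) ((hint 0).const_mul _) measurableSet_Ioi fun a _ => ?_
  by_cases hka : k a = 0
  · simp [hka]
  · have hδa : δ ≤ a := hsupp hka
    simpa only [neg_zero, zero_mul, exp_zero, one_mul] using
      mul_le_mul_of_nonneg_right (exp_le_exp.2 (by nlinarith)) (hk a)

theorem exp_mul_zero_le (hk : ∀ a, 0 ≤ k a) (hsupp : support k ⊆ Ici δ)
    (hint : ∀ l, IntegrableOn (fun a => exp (-l * a) * k a) (Ioi 0)) {l : ℝ} (hl : l ≤ 0) :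
    exp (-l * δ) * laplaceTransform k 0 ≤ laplaceTransform k l := by
  rw [laplaceTransform, laplaceTransform, ← integral_const_mul]
  refine setIntegral_mono_on ((hint 0).const_mul _) (hint l) measurableSet_Ioi fun a _ => ?_
  by_cases hka : k a = 0
  · simp [hka]
  · have hδa : δ ≤ a := hsupp hka
    simpa only [neg_zero, zero_mul, exp_zero, one_mul] using
      mul_le_mul_of_nonneg_right (exp_le_exp.2 (by nlinarith)) (hk a)

theorem exists_eq (hk : ∀ a, 0 ≤ k a) (hpos : 0 < volume {a | a ∈ Ioi (0 : ℝ) ∧ 0 < k a})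
    (hδ : 0 < δ) (hsupp : support k ⊆ Ici δ)
    (hint : ∀ l, IntegrableOn (fun a => exp (-l * a) * k a) (Ioi 0)) {c : ℝ} (hc : 0 < c) :
    ∃ l, laplaceTransform k l = c := by
  set R := laplaceTransform k 0
  have hR : 0 < R := (nonneg hk 1).trans_lt (strictAnti hk hpos hint zero_lt_one)
  -- `exp (-x) * R = c`; moving the exponent to `∓|x|` lands on either side of `c`
  set x := log (R / c)
  have hxR : exp (-x) * R = c := by
    rw [exp_neg, exp_log (div_pos hR hc)]
    field_simp
  have hLδ : |x| / δ * δ = |x| := div_mul_cancel₀ _ hδ.ne'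
  refine mem_range_of_exists_le_of_exists_ge (continuous hk hint) ⟨|x| / δ, ?_⟩ ⟨-(|x| / δ), ?_⟩
  · calc laplaceTransform k (|x| / δ) ≤ exp (-(|x| / δ) * δ) * R :=
          le_exp_mul_zero hk hsupp hint (by positivity)
      _ ≤ exp (-x) * R := by
          rw [neg_mul, hLδ]
          gcongr
          exact le_abs_self x
      _ = c := hxR
  · calc c = exp (-x) * R := hxR.symm
      _ ≤ exp (-(-(|x| / δ)) * δ) * R := by
          rw [neg_neg, hLδ]
          gcongr
          exact neg_le_abs x
      _ ≤ laplaceTransform k (-(|x| / δ)) :=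
          exp_mul_zero_le hk hsupp hint (neg_nonpos.2 (by positivity))

end laplaceTransform

theorem eulerLotka_unique_real_root_and_sign_general
    (k : ℝ → ℝ) (δ amax : ℝ) (hδ : 0 < δ)
    (hk_meas : Measurable k)
    (hk_nonneg : ∀ a, 0 ≤ k a)
    (hk_bdd : ∃ C, ∀ a, k a ≤ C)
    (hk_supp : ∀ a, a ∉ Icc δ amax → k a = 0)
    (hk_nontriv : 0 < volume {a | a ∈ Ioi (0:ℝ) ∧ 0 < k a})
    (K : ℝ → ℝ) (hK : ∀ l, K l = ∫ a in Ioi (0:ℝ), Real.exp (-l * a) * k a)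
    (R₀ : ℝ) (hR₀ : R₀ = K 0) :
    (∃! r : ℝ, K r = 1) ∧
      ∀ r : ℝ, K r = 1 → Real.sign (R₀ - 1) = Real.sign r := by
  obtain rfl : K = laplaceTransform k := funext hK
  subst hR₀
  obtain ⟨C, hC⟩ := hk_bdd
  have hsupp : support k ⊆ Icc δ amax := fun a ha => by_contra fun h => ha (hk_supp a h)
  have hk_int : IntegrableOn k (Icc δ amax) :=
    Measure.integrableOn_of_bounded measure_Icc_lt_top.ne hk_meas.aestronglyMeasurable
      (ae_of_all _ fun a => (norm_of_nonneg (hk_nonneg a)).trans_le (hC a))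
  have hint : ∀ l, IntegrableOn (fun a => exp (-l * a) * k a) (Ioi 0) := fun l =>
    (integrable_mul_of_support_subset_isCompact (by fun_prop) isCompact_Icc hk_int
      hsupp).integrableOn
  have hanti := laplaceTransform.strictAnti hk_nonneg hk_nontriv hint
  obtain ⟨r, hr⟩ := laplaceTransform.exists_eq hk_nonneg hk_nontriv hδ
    (hsupp.trans Icc_subset_Ici_self) hint one_pos
  refine ⟨⟨r, hr, fun s hs => hanti.injective (hs.trans hr.symm)⟩, fun s hs => ?_⟩
  rw [← hs, hanti.sign_sub, sub_zero]

/-- For a nonnegative, nontrivial, bounded kernel supported in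
`[δ, a_max]` with `0 < δ`, the Euler–Lotka equation `k̄(λ) = 1` has exactly one
real root `r`, and `sign (R₀ - 1) = sign r` where `R₀ = k̄(0)`. -/
theorem eulerLotka_unique_real_root_and_sign
    (k : ℝ → ℝ) (δ amax : ℝ) (hδ : 0 < δ) (hδamax : δ ≤ amax)
    (hk_meas : Measurable k)
    (hk_nonneg : ∀ a, 0 ≤ k a)
    (hk_bdd : ∃ C, ∀ a, k a ≤ C)
    (hk_supp : ∀ a, a ∉ Icc δ amax → k a = 0)
    (hk_nontriv : 0 < volume {a | a ∈ Ioi (0:ℝ) ∧ 0 < k a})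
    (K : ℝ → ℝ) (hK : ∀ l, K l = ∫ a in Ioi (0:ℝ), Real.exp (-l * a) * k a)
    (R₀ : ℝ) (hR₀ : R₀ = K 0) :
    (∃! r : ℝ, K r = 1) ∧
      ∀ r : ℝ, K r = 1 → Real.sign (R₀ - 1) = Real.sign r :=
  eulerLotka_unique_real_root_and_sign_general k δ amax hδ hk_meas hk_nonneg hk_bdd hk_supp
    hk_nontriv K hK R₀ hR₀
end

section
/- Let Σ be a d×d real matrix, U, V ∈ ℝ^d, and k(a) = U · (e^{aΣ} V). If b : ℝ → ℝ is continuous and bounded on (−∞, T], with suitable decay ensuring convergence, and y(t) = e^{tΣ} ∫_{−∞}^t e^{−θΣ} V b(θ) dθ, then y satisfies the ODE y′ = Σy + b V, and b(t) = U · y(t) holds if and only if b satisfies the renewal equation b(t) = ∫₀^∞ k(a) b(t−a) da. -/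
open MeasureTheory Set Matrix

/-!
Differentiating `y(t) = e^{tΣ} ∫_{-∞}^t e^{-θΣ} V b(θ) dθ` by the product rule gives
`Σ y(t) + e^{tΣ} e^{-tΣ} V b(t) = Σ y(t) + b(t) V`. For the renewal equation, pull `U ·` inside
the integral: the integrand becomes `U · e^{(t-θ)Σ} V b(θ) = k(t - θ) b(θ)`, and the substitution
`a = t - θ` turns `U · y(t)` into `∫_0^∞ k(a) b(t - a) da`, so `b = U · y` and the renewal
equation are the same condition.
-/

theorem integral_Iic_comp_sub_left {E : Type*} [NormedAddCommGroup E] [NormedSpace ℝ E]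
    (f : ℝ → E) (t : ℝ) : ∫ θ in Iic t, f (t - θ) = ∫ a in Ioi 0, f a := by
  have h := (Measure.measurePreserving_sub_left volume t).setIntegral_preimage_emb
    (MeasurableEquiv.subLeft t).measurableEmbedding f (Ici 0)
  rwa [preimage_const_sub_Ici, sub_zero, integral_Ici_eq_integral_Ioi] at h

theorem hasDerivAt_integral_Iic {E : Type*} [NormedAddCommGroup E] [NormedSpace ℝ E]
    [CompleteSpace E] {f : ℝ → E} (hf : Continuous f) (hint : ∀ t, IntegrableOn f (Iic t))
    (t : ℝ) : HasDerivAt (fun u => ∫ θ in Iic u, f θ) (f t) t := by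
  have hsplit : ∀ u, ∫ θ in Iic u, f θ = (∫ θ in Iic t, f θ) + ∫ θ in t..u, f θ := fun u =>
    (sub_eq_iff_eq_add'.mp (intervalIntegral.integral_Iic_sub_Iic (hint t) (hint u)))
  rw [funext hsplit]
  exact (intervalIntegral.integral_hasDerivAt_right (hf.intervalIntegrable t t)
    (hf.stronglyMeasurableAtFilter _ _) hf.continuousAt).const_add _

theorem Matrix.dotProduct_integral {α n : Type*} [Fintype n] [MeasurableSpace α] {μ : Measure α}
    (w : n → ℝ) {f : α → n → ℝ} (hf : Integrable f μ) :
    w ⬝ᵥ ∫ x, f x ∂μ = ∫ x, w ⬝ᵥ f x ∂μ :=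
  ((dotProductBilin ℝ ℝ w).toContinuousLinearMap.integral_comp_comm hf).symm

section VariationOfConstants

open NormedSpace
open scoped Norms.Operator

theorem HasDerivAt.matrix_mulVec {m n : Type*} [Fintype m] [Fintype n]
    {M : ℝ → Matrix m n ℝ} {v : ℝ → n → ℝ} {M' : Matrix m n ℝ} {v' : n → ℝ} {t : ℝ}
    (hM : HasDerivAt M M' t) (hv : HasDerivAt v v' t) :
    HasDerivAt (fun s => M s *ᵥ v s) (M' *ᵥ v t + M t *ᵥ v') t := by
  let B : Matrix m n ℝ →L[ℝ] (n → ℝ) →L[ℝ] m → ℝ :=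
    (LinearMap.toContinuousLinearMap.toLinearMap ∘ₗ mulVecBilin ℝ ℝ).toContinuousLinearMap
  rw [add_comm]
  exact B.hasDerivAt_of_bilinear (fun _ => hM) (fun _ => hv)

variable {n : Type*} [Fintype n] [DecidableEq n]

theorem Matrix.exp_smul_mulVec_exp_smul_mulVec (A : Matrix n n ℝ) (s u : ℝ) (w : n → ℝ) :
    exp (s • A) *ᵥ (exp (u • A) *ᵥ w) = exp ((s + u) • A) *ᵥ w := by
  rw [mulVec_mulVec, add_smul,
    Matrix.exp_add_of_commute _ _ (((Commute.refl A).smul_left s).smul_right u)]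

noncomputable def Matrix.duhamel (A : Matrix n n ℝ) (g : ℝ → n → ℝ) (t : ℝ) : n → ℝ :=
  exp (t • A) *ᵥ ∫ θ in Iic t, exp ((-θ) • A) *ᵥ g θ

theorem Matrix.hasDerivAt_duhamel (A : Matrix n n ℝ) {g : ℝ → n → ℝ} (hg : Continuous g)
    (hint : ∀ t, IntegrableOn (fun θ : ℝ => exp ((-θ) • A) *ᵥ g θ) (Iic t)) (t : ℝ) :
    HasDerivAt (duhamel A g) (A *ᵥ duhamel A g t + g t) t := by
  have hcont : Continuous fun θ : ℝ => exp ((-θ) • A) *ᵥ g θ :=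
    ((differentiable_exp_smul_const ℝ A).continuous.comp continuous_neg).matrix_mulVec hg
  -- The ascription elaborates `exp` with the default ring structure on matrices rather than the
  -- operator-norm one, so that the rewrites below apply.
  have hexp : HasDerivAt (fun u : ℝ => exp (u • A)) (A * exp (t • A)) t :=
    hasDerivAt_exp_smul_const' A t
  have h := hexp.matrix_mulVec (hasDerivAt_integral_Iic hcont hint t)
  rwa [← mulVec_mulVec, exp_smul_mulVec_exp_smul_mulVec, add_neg_cancel, zero_smul, exp_zero,
    one_mulVec] at h

theorem Matrix.dotProduct_duhamel (A : Matrix n n ℝ) {g : ℝ → n → ℝ} {t : ℝ}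
    (hint : IntegrableOn (fun θ : ℝ => exp ((-θ) • A) *ᵥ g θ) (Iic t)) (U : n → ℝ) :
    U ⬝ᵥ duhamel A g t = ∫ a in Ioi 0, U ⬝ᵥ exp (a • A) *ᵥ g (t - a) := by
  rw [duhamel, dotProduct_mulVec, dotProduct_integral _ hint, ← integral_Iic_comp_sub_left]
  refine setIntegral_congr_fun measurableSet_Iic fun θ _ => ?_
  rw [← dotProduct_mulVec, exp_smul_mulVec_exp_smul_mulVec, sub_sub_cancel, sub_eq_add_neg]

end VariationOfConstants

/-- For `k(a) = U · (e^{aΣ} V)` and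
`y(t) = e^{tΣ} ∫_{−∞}^t e^{−θΣ} V b(θ) dθ`, the function `y` satisfies the ODE
`y' = Σ y + b V`, and `b(t) = U · y(t)` for all `t` if and only if `b` satisfies
the renewal equation `b(t) = ∫₀^∞ k(a) b(t−a) da`. -/
theorem RE_is_ODE_in_disguise
    (d : ℕ) (Sig : Matrix (Fin d) (Fin d) ℝ) (U V : Fin d → ℝ)
    (k : ℝ → ℝ)
    (hk : ∀ a, k a = U ⬝ᵥ (NormedSpace.exp (a • Sig)).mulVec V)
    (b : ℝ → ℝ) (hb_cont : Continuous b)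
    (hb_int : ∀ t : ℝ,
      IntegrableOn (fun θ => (NormedSpace.exp ((-θ) • Sig)).mulVec (b θ • V)) (Iic t))
    (y : ℝ → (Fin d → ℝ))
    (hy : ∀ t, y t = (NormedSpace.exp (t • Sig)).mulVec
      (∫ θ in Iic t, (NormedSpace.exp ((-θ) • Sig)).mulVec (b θ • V))) :
    (∀ t, HasDerivAt y (Sig.mulVec (y t) + b t • V) t) ∧
      ((∀ t, b t = U ⬝ᵥ y t) ↔ ∀ t, b t = ∫ a in Ioi (0:ℝ), k a * b (t - a)) := by
  obtain rfl : y = duhamel Sig (fun θ => b θ • V) := funext hy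
  have hrenewal : ∀ t,
      U ⬝ᵥ duhamel Sig (fun θ => b θ • V) t = ∫ a in Ioi (0:ℝ), k a * b (t - a) := fun t => by
    simp only [dotProduct_duhamel Sig (hb_int t), mulVec_smul, dotProduct_smul, hk, smul_eq_mul,
      mul_comm]
  refine ⟨hasDerivAt_duhamel Sig (hb_cont.smul continuous_const) hb_int, ?_⟩
  exact ⟨fun h t => (h t).trans (hrenewal t), fun h t => (h t).trans (hrenewal t).symm⟩
end
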